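/- arXiv:2207.05177 — 5 statements merged into one kernel-verified Lean document; each statement's English description precedes it below -/
import Mathlib

section
/- The derivative of Φ(β) = 2π − 2·arccos((β−1)/(β+1)) − arccos((1−6β+β²)/(1+β)²) vanishes for all β in (0,1). -/
/-!
Writing `β = x ^ 2` with `0 ≤ x ≤ 1` and `a = arctan x ∈ [0, π/4]`, the two arccos arguments are
`-cos (2a)` and `cos (4a)`, so `Φ(β) = 2π - 2(π - 2a) - 4a = 0`. Thus `Φ` vanishes on `[0, 1]`,
and its derivative vanishes on the interior.
-/

open Real

theorem Real.cos_two_mul_arctan (x : ℝ) : cos (2 * arctan x) = (1 - x ^ 2) / (1 + x ^ 2) := by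
  have hx : 1 + x ^ 2 ≠ 0 := by positivity
  rw [cos_two_mul, cos_sq_arctan]
  field_simp
  ring

theorem Real.cos_four_mul_arctan (x : ℝ) :
    cos (4 * arctan x) = (1 - 6 * x ^ 2 + x ^ 4) / (1 + x ^ 2) ^ 2 := by
  have hx : 1 + x ^ 2 ≠ 0 := by positivity
  rw [show 4 * arctan x = 2 * (2 * arctan x) by ring, cos_two_mul, cos_two_mul_arctan]
  field_simp
  ring

noncomputable def phi (b : ℝ) : ℝ :=
  2 * π - 2 * arccos ((b - 1) / (b + 1)) - arccos ((1 - 6 * b + b ^ 2) / (1 + b) ^ 2)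

theorem phi_eq_zero_of_mem_Icc {b : ℝ} (hb : b ∈ Set.Icc (0 : ℝ) 1) : phi b = 0 := by
  obtain ⟨x, hx0, hx1, rfl⟩ : ∃ x, 0 ≤ x ∧ x ≤ 1 ∧ b = x ^ 2 :=
    ⟨√b, sqrt_nonneg b, sqrt_le_one.2 hb.2, (sq_sqrt hb.1).symm⟩
  have ha0 : 0 ≤ arctan x := arctan_nonneg.2 hx0
  have ha1 : arctan x ≤ π / 4 := arctan_one ▸ arctan_le_arctan_iff.2 hx1
  have h2 : (x ^ 2 - 1) / (x ^ 2 + 1) = -cos (2 * arctan x) := by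
    rw [cos_two_mul_arctan]
    ring
  have h4 : (1 - 6 * x ^ 2 + (x ^ 2) ^ 2) / (1 + x ^ 2) ^ 2 = cos (4 * arctan x) := by
    rw [cos_four_mul_arctan]
    ring
  rw [phi, h2, h4, arccos_neg, arccos_cos (by linarith) (by linarith),
    arccos_cos (by linarith) (by linarith)]
  ring

theorem phi_deriv_zero (β : ℝ) (hβ0 : 0 < β) (hβ1 : β < 1) :
    HasDerivAt (fun b : ℝ =>
      2 * π - 2 * arccos ((b - 1) / (b + 1)) -
        arccos ((1 - 6 * b + b ^ 2) / (1 + b) ^ 2)) 0 β := by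
  show HasDerivAt phi 0 β
  refine (hasDerivAt_const β (0 : ℝ)).congr_of_eventuallyEq ?_
  filter_upwards [Icc_mem_nhds hβ0 hβ1] with b hb
  exact phi_eq_zero_of_mem_Icc hb
end

section
/- Let β > 0 and h > 2√β. For the solution x(t) = β + (1−β)cos t − h sin t, y(t) = −h cos t + (β−1) sin t of ẋ = y, ẏ = −x+β starting at (1,−h), the time t_C = arccos((h√(h²−4β) − 1 + β²)/(h² + (β−1)²)) satisfies x(t_C) = −1, provided the argument of arccos lies in [−1,1]. -/
/-!
Write `z` for the cosine in question and `s = √(h² - 4β)`. Since `sin (arccos z) = √(1 - z²)`,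
the claim `x(t_C) = -1` amounts to `h √(1 - z²) = β + 1 + (1 - β) z`. Clearing the denominator
`h² + (β - 1)²`, the right-hand side becomes `h ((β + 1) h + (1 - β) s) / (h² + (β - 1)²)`, which is
nonnegative, and squaring both sides leaves a polynomial identity modulo `s² = h² - 4β`. That
identity also forces `z² ≤ 1`, so `z` is a genuine cosine.
-/

open Real

lemma abs_le_one_of_sq_mul_one_sub_sq_eq {h z w : ℝ} (hh : h ≠ 0)
    (hz : h ^ 2 * (1 - z ^ 2) = w ^ 2) : |z| ≤ 1 := by
  have : 0 ≤ 1 - z ^ 2 := (mul_nonneg_iff_of_pos_left (by positivity)).1 (hz ▸ sq_nonneg w)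
  exact (sq_le_one_iff_abs_le_one z).1 (by linarith)

lemma mul_sin_arccos_eq_of_sq_mul_one_sub_sq_eq {h z w : ℝ} (hh : 0 ≤ h) (hw : 0 ≤ w)
    (hz : h ^ 2 * (1 - z ^ 2) = w ^ 2) : h * sin (arccos z) = w := by
  rw [sin_arccos, ← sqrt_sq hh, ← sqrt_mul (sq_nonneg h), hz, sqrt_sq hw]

lemma orbit_at_arccos_eq_neg_one {β h z : ℝ} (hh : 0 < h) (hw : 0 ≤ β + 1 + (1 - β) * z)
    (hz : h ^ 2 * (1 - z ^ 2) = (β + 1 + (1 - β) * z) ^ 2) :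
    β + (1 - β) * cos (arccos z) - h * sin (arccos z) = -1 := by
  obtain ⟨hz₁, hz₂⟩ := abs_le.1 (abs_le_one_of_sq_mul_one_sub_sq_eq hh.ne' hz)
  rw [cos_arccos hz₁ hz₂, mul_sin_arccos_eq_of_sq_mul_one_sub_sq_eq hh.le hw hz]
  ring

section FlightCosine

/-- The cosine of the flight time, with `s` standing for `√(h² - 4β)`. -/
noncomputable def flightCos (β h s : ℝ) : ℝ := (h * s - 1 + β ^ 2) / (h ^ 2 + (β - 1) ^ 2)

variable {β h s : ℝ}

lemma flightCos_sin_numerator (hD : h ^ 2 + (β - 1) ^ 2 ≠ 0) :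
    β + 1 + (1 - β) * flightCos β h s
      = h * ((β + 1) * h + (1 - β) * s) / (h ^ 2 + (β - 1) ^ 2) := by
  rw [flightCos]
  field_simp
  ring

/-- `(β + 1) h + (1 - β) s = (h + s) + β (h - s)`, and `β (h - s) (h + s) = 4 β²`. -/
lemma flightCos_sin_factor_nonneg (hh : 0 ≤ h) (hs₀ : 0 ≤ s) (hs : s ^ 2 = h ^ 2 - 4 * β) :
    0 ≤ (β + 1) * h + (1 - β) * s := by
  nlinarith [mul_nonneg hh hs₀, sq_nonneg (h - s), sq_nonneg β]

lemma sq_mul_one_sub_flightCos_sq (hD : h ^ 2 + (β - 1) ^ 2 ≠ 0) (hs : s ^ 2 = h ^ 2 - 4 * β) :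
    h ^ 2 * (1 - flightCos β h s ^ 2) = (β + 1 + (1 - β) * flightCos β h s) ^ 2 := by
  rw [flightCos_sin_numerator hD, flightCos]
  field_simp
  linear_combination (-(h ^ 2) * (h ^ 2 + (β - 1) ^ 2)) * hs

end FlightCosine

theorem central_flight_time_reaches_left_line_general (β h : ℝ)
    (hh : 2 * Real.sqrt β < h) :
    β + (1 - β) * Real.cos (arccos
        ((h * Real.sqrt (h ^ 2 - 4 * β) - 1 + β ^ 2) / (h ^ 2 + (β - 1) ^ 2)))
      - h * Real.sin (arccos
        ((h * Real.sqrt (h ^ 2 - 4 * β) - 1 + β ^ 2) / (h ^ 2 + (β - 1) ^ 2))) = -1 := by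
  have hpos : 0 < h := (mul_nonneg zero_le_two (sqrt_nonneg β)).trans_lt hh
  have hdisc : β < (h / 2) ^ 2 := (sqrt_lt' (by positivity)).1 (by linarith)
  have hs : √(h ^ 2 - 4 * β) ^ 2 = h ^ 2 - 4 * β := sq_sqrt (by linarith)
  have hD : h ^ 2 + (β - 1) ^ 2 ≠ 0 := by positivity
  refine orbit_at_arccos_eq_neg_one (z := flightCos β h _) hpos ?_
    (sq_mul_one_sub_flightCos_sq hD hs)
  rw [flightCos_sin_numerator hD]
  exact div_nonneg (mul_nonneg hpos.le (flightCos_sin_factor_nonneg hpos.le (sqrt_nonneg _) hs))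
    (by positivity)

theorem central_flight_time_reaches_left_line (β h : ℝ) (hβ : 0 < β)
    (hh : 2 * Real.sqrt β < h)
    (hz1 : -1 ≤ (h * Real.sqrt (h ^ 2 - 4 * β) - 1 + β ^ 2) / (h ^ 2 + (β - 1) ^ 2))
    (hz2 : (h * Real.sqrt (h ^ 2 - 4 * β) - 1 + β ^ 2) / (h ^ 2 + (β - 1) ^ 2) ≤ 1) :
    β + (1 - β) * Real.cos (arccos
        ((h * Real.sqrt (h ^ 2 - 4 * β) - 1 + β ^ 2) / (h ^ 2 + (β - 1) ^ 2)))
      - h * Real.sin (arccos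
        ((h * Real.sqrt (h ^ 2 - 4 * β) - 1 + β ^ 2) / (h ^ 2 + (β - 1) ^ 2))) = -1 :=
  central_flight_time_reaches_left_line_general β h hh
end

section
/- Let β ∈ (0,1) and 0 < h < 2√β. For the solution x(t) = β + (1−β)cos t − h sin t, y(t) = −h cos t + (β−1) sin t of ẋ = y, ẏ = −x+β starting at (1,−h), the time t_C = 2π − arccos((1−h²−2β+β²)/(h²+(β−1)²)) satisfies x(t_C) = 1 and y(t_C) = h. -/
/-! The orbit is a clockwise rotation about the centre `(β, 0)`, and the target `(1, h)` is the
mirror image of the start `(1, -h)` in the `x`-axis. With `(u, v) = (1 - β, -h)`, the rotation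
taking `(u, v)` to `(u, -v)` has cosine `(u² - v²)/(u² + v²)` and sine `2uv/(u² + v²) ≤ 0`, the
double-angle formulas for the argument of `(u, v)`; such an angle lies in `[π, 2π]` and is
`2π - arccos` of its cosine. -/

open Real

noncomputable def cosDoubleArg (u v : ℝ) : ℝ := (u ^ 2 - v ^ 2) / (u ^ 2 + v ^ 2)

noncomputable def sinDoubleArg (u v : ℝ) : ℝ := 2 * u * v / (u ^ 2 + v ^ 2)

section DoubleArg

variable {u v : ℝ}

theorem cosDoubleArg_sq_add_sinDoubleArg_sq (huv : u ^ 2 + v ^ 2 ≠ 0) :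
    cosDoubleArg u v ^ 2 + sinDoubleArg u v ^ 2 = 1 := by
  unfold cosDoubleArg sinDoubleArg
  field_simp
  ring

theorem mul_cosDoubleArg_add_mul_sinDoubleArg (huv : u ^ 2 + v ^ 2 ≠ 0) :
    u * cosDoubleArg u v + v * sinDoubleArg u v = u := by
  unfold cosDoubleArg sinDoubleArg
  field_simp
  ring

theorem mul_cosDoubleArg_sub_mul_sinDoubleArg (huv : u ^ 2 + v ^ 2 ≠ 0) :
    v * cosDoubleArg u v - u * sinDoubleArg u v = -v := by
  unfold cosDoubleArg sinDoubleArg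
  field_simp
  ring

end DoubleArg

theorem cos_sin_two_pi_sub_arccos {c s : ℝ} (hcs : c ^ 2 + s ^ 2 = 1) (hs : s ≤ 0) :
    cos (2 * π - arccos c) = c ∧ sin (2 * π - arccos c) = s := by
  have hc : |c| ≤ 1 := (sq_le_one_iff_abs_le_one c).mp (by nlinarith)
  refine ⟨?_, ?_⟩
  · rw [cos_two_pi_sub, cos_arccos (abs_le.mp hc).1 (abs_le.mp hc).2]
  · rw [sin_two_pi_sub, sin_arccos, show 1 - c ^ 2 = s ^ 2 by linarith, sqrt_sq_eq_abs,
      abs_of_nonpos hs, neg_neg]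

theorem central_return_time_two_zones_general (β h : ℝ) (hβ1 : β < 1)
    (hh0 : 0 < h) :
    (β + (1 - β) * Real.cos (2 * π - arccos
        ((1 - h ^ 2 - 2 * β + β ^ 2) / (h ^ 2 + (β - 1) ^ 2)))
      - h * Real.sin (2 * π - arccos
        ((1 - h ^ 2 - 2 * β + β ^ 2) / (h ^ 2 + (β - 1) ^ 2))) = 1) ∧
    (-h * Real.cos (2 * π - arccos
        ((1 - h ^ 2 - 2 * β + β ^ 2) / (h ^ 2 + (β - 1) ^ 2)))
      + (β - 1) * Real.sin (2 * π - arccos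
        ((1 - h ^ 2 - 2 * β + β ^ 2) / (h ^ 2 + (β - 1) ^ 2))) = h) := by
  have huv : (1 - β) ^ 2 + (-h) ^ 2 ≠ 0 := by positivity
  have hc : (1 - h ^ 2 - 2 * β + β ^ 2) / (h ^ 2 + (β - 1) ^ 2) = cosDoubleArg (1 - β) (-h) := by
    unfold cosDoubleArg
    congr 1 <;> ring
  have hs : sinDoubleArg (1 - β) (-h) ≤ 0 :=
    div_nonpos_of_nonpos_of_nonneg (by nlinarith) (by positivity)
  obtain ⟨hcos, hsin⟩ := cos_sin_two_pi_sub_arccos (cosDoubleArg_sq_add_sinDoubleArg_sq huv) hs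
  rw [hc, hcos, hsin]
  constructor
  · linarith [mul_cosDoubleArg_add_mul_sinDoubleArg huv]
  · linarith [mul_cosDoubleArg_sub_mul_sinDoubleArg huv]

theorem central_return_time_two_zones (β h : ℝ) (hβ0 : 0 < β) (hβ1 : β < 1)
    (hh0 : 0 < h) (hh1 : h < 2 * Real.sqrt β) :
    (β + (1 - β) * Real.cos (2 * π - arccos
        ((1 - h ^ 2 - 2 * β + β ^ 2) / (h ^ 2 + (β - 1) ^ 2)))
      - h * Real.sin (2 * π - arccos
        ((1 - h ^ 2 - 2 * β + β ^ 2) / (h ^ 2 + (β - 1) ^ 2))) = 1) ∧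
    (-h * Real.cos (2 * π - arccos
        ((1 - h ^ 2 - 2 * β + β ^ 2) / (h ^ 2 + (β - 1) ^ 2)))
      + (β - 1) * Real.sin (2 * π - arccos
        ((1 - h ^ 2 - 2 * β + β ^ 2) / (h ^ 2 + (β - 1) ^ 2))) = h) :=
  central_return_time_two_zones_general β h hβ1 hh0
end

section
/- Let ω > 0, b > 0, a, τ be reals with ω² = a² + b·c for some c, and let h ∈ (0,τ) with τ > 0. Define x(t) = −(e^{−tω}/(2ω))(b h − b e^{2tω} h − 2 e^{tω} ω + bτ − 2b e^{tω} τ + b e^{2tω} τ). Then x(0) = 1 and x(t_R) = 1 where t_R = (1/ω)·log((h+τ)/(τ−h)). -/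
/-! With `u = exp (t ω)` the first coordinate is
`x(t) = 1 - b (1 - u) ((h + τ) - u (τ - h)) / (2 ω u)`,
so `x(t) = 1` at `u = 1` (that is `t = 0`) and at `u = (h + τ) / (τ - h)`. -/

open Real

noncomputable def rightSaddleX (ω b τ h t : ℝ) : ℝ :=
  -(Real.exp (-t * ω) / (2 * ω)) *
    (b * h - b * Real.exp (2 * t * ω) * h - 2 * Real.exp (t * ω) * ω +
      b * τ - 2 * b * Real.exp (t * ω) * τ + b * Real.exp (2 * t * ω) * τ)

lemma rightSaddleX_eq {ω : ℝ} (hω : ω ≠ 0) (b τ h t : ℝ) :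
    rightSaddleX ω b τ h t =
      1 - b * (1 - exp (t * ω)) * ((h + τ) - exp (t * ω) * (τ - h)) / (2 * ω * exp (t * ω)) := by
  have hsq : exp (2 * t * ω) = exp (t * ω) ^ 2 := by rw [← exp_nat_mul]; ring_nf
  have hinv : exp (-t * ω) = (exp (t * ω))⁻¹ := by rw [← exp_neg]; ring_nf
  rw [rightSaddleX, hsq, hinv]
  field_simp
  ring

lemma rightSaddleX_eq_one_of_exp_eq {ω : ℝ} (hω : ω ≠ 0) (b τ h t : ℝ)
    (ht : exp (t * ω) = 1 ∨ exp (t * ω) * (τ - h) = h + τ) :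
    rightSaddleX ω b τ h t = 1 := by
  rw [rightSaddleX_eq hω]
  rcases ht with ht | ht <;> simp [ht]

lemma exp_one_div_mul_log_mul {ω : ℝ} (hω : ω ≠ 0) {y : ℝ} (hy : 0 < y) :
    exp ((1 / ω) * log y * ω) = y := by
  rw [div_mul_eq_mul_div, one_mul, div_mul_cancel₀ _ hω, exp_log hy]

theorem right_zone_flight_time_general (ω b τ h : ℝ) (hω : 0 < ω)
    (hh0 : 0 < h) (hh1 : h < τ) :
    (-(Real.exp (-(0:ℝ) * ω) / (2 * ω)) *
        (b * h - b * Real.exp (2 * 0 * ω) * h - 2 * Real.exp ((0:ℝ) * ω) * ω +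
          b * τ - 2 * b * Real.exp ((0:ℝ) * ω) * τ + b * Real.exp (2 * 0 * ω) * τ) = 1) ∧
    (-(Real.exp (-((1 / ω) * Real.log ((h + τ) / (τ - h))) * ω) / (2 * ω)) *
        (b * h - b * Real.exp (2 * ((1 / ω) * Real.log ((h + τ) / (τ - h))) * ω) * h -
          2 * Real.exp (((1 / ω) * Real.log ((h + τ) / (τ - h))) * ω) * ω +
          b * τ - 2 * b * Real.exp (((1 / ω) * Real.log ((h + τ) / (τ - h))) * ω) * τ +
          b * Real.exp (2 * ((1 / ω) * Real.log ((h + τ) / (τ - h))) * ω) * τ) = 1) := by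
  have hgap : τ - h ≠ 0 := by linarith
  have hratio : 0 < (h + τ) / (τ - h) := div_pos (by linarith) (by linarith)
  refine ⟨rightSaddleX_eq_one_of_exp_eq hω.ne' b τ h 0 (Or.inl (by simp)),
    rightSaddleX_eq_one_of_exp_eq hω.ne' b τ h _ (Or.inr ?_)⟩
  rw [exp_one_div_mul_log_mul hω.ne' hratio, div_mul_cancel₀ _ hgap]

theorem right_zone_flight_time (ω b a τ h : ℝ) (hω : 0 < ω) (hb : 0 < b)
    (hsaddle : ∃ c : ℝ, ω ^ 2 = a ^ 2 + b * c) (hτ : 0 < τ)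
    (hh0 : 0 < h) (hh1 : h < τ) :
    (-(Real.exp (-(0:ℝ) * ω) / (2 * ω)) *
        (b * h - b * Real.exp (2 * 0 * ω) * h - 2 * Real.exp ((0:ℝ) * ω) * ω +
          b * τ - 2 * b * Real.exp ((0:ℝ) * ω) * τ + b * Real.exp (2 * 0 * ω) * τ) = 1) ∧
    (-(Real.exp (-((1 / ω) * Real.log ((h + τ) / (τ - h))) * ω) / (2 * ω)) *
        (b * h - b * Real.exp (2 * ((1 / ω) * Real.log ((h + τ) / (τ - h))) * ω) * h -
          2 * Real.exp (((1 / ω) * Real.log ((h + τ) / (τ - h))) * ω) * ω +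
          b * τ - 2 * b * Real.exp (((1 / ω) * Real.log ((h + τ) / (τ - h))) * ω) * τ +
          b * Real.exp (2 * ((1 / ω) * Real.log ((h + τ) / (τ - h))) * ω) * τ) = 1) :=
  right_zone_flight_time_general ω b τ h hω hh0 hh1
end

section
/- The equation λ₁(β) = 2(β−1)√β − (1 + (β−6)β)·arccos((β−1)/(β+1)) = 0 has a unique solution β* in the interval (0,1], and β* ≈ 0.23031022687 (in particular β* ∈ (0.23, 0.231)). -/
open Real

/-! On `(0, 1]` the derivative of `λ₁` simplifies to
`4 √x (x - 1) / (x + 1) + (6 - 2x) arccos ((x - 1) / (x + 1))`; the first term is at least `-4`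
and the arccos is at least `π / 2`, so the derivative exceeds `2π - 4 > 0`. Thus `λ₁` is strictly
increasing on `[0, 1]` and has at most one zero there, and a sign change between `0.23` and
`0.231` gives one. At these points `arccos (-t) = π - arccos t` with `t ≈ 0.625`, and the needed
bounds on `arccos t` come from the Taylor bounds for `cos` near `0.9`. -/

noncomputable def lambdaOne (x : ℝ) : ℝ :=
  2 * (x - 1) * √x - (1 + (x - 6) * x) * arccos ((x - 1) / (x + 1))

lemma sqrt_one_sub_sq_sub_one_div_add_one {x : ℝ} (hx : 0 ≤ x) :
    √(1 - ((x - 1) / (x + 1)) ^ 2) = 2 * √x / (x + 1) := by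
  have hx1 : 0 < x + 1 := by linarith
  rw [← sqrt_sq (by positivity : 0 ≤ 2 * √x / (x + 1))]
  congr 1
  field_simp
  rw [sq_sqrt hx]
  ring

lemma hasDerivAt_arccos_sub_one_div_add_one {x : ℝ} (hx : 0 < x) :
    HasDerivAt (fun y => arccos ((y - 1) / (y + 1))) (-1 / ((x + 1) * √x)) x := by
  have hx1 : 0 < x + 1 := by linarith
  have hquot : HasDerivAt (fun y => (y - 1) / (y + 1)) (2 / (x + 1) ^ 2) x :=
    (((hasDerivAt_id x).sub_const 1).div ((hasDerivAt_id x).add_const 1) hx1.ne').congr_deriv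
      (by simp only [id]; ring)
  have hlo : (x - 1) / (x + 1) ≠ -1 := by
    rw [ne_eq, div_eq_iff hx1.ne']; intro h; linarith
  have hhi : (x - 1) / (x + 1) ≠ 1 := by
    rw [ne_eq, div_eq_iff hx1.ne']; intro h; linarith
  refine ((hasDerivAt_arccos hlo hhi).comp x hquot).congr_deriv ?_
  have hs : 0 < √x := sqrt_pos.mpr hx
  rw [sqrt_one_sub_sq_sub_one_div_add_one hx.le]
  field_simp

lemma hasDerivAt_lambdaOne {x : ℝ} (hx : 0 < x) :
    HasDerivAt lambdaOne
      (4 * √x * (x - 1) / (x + 1) + (6 - 2 * x) * arccos ((x - 1) / (x + 1))) x := by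
  have hx1 : 0 < x + 1 := by linarith
  have hs : 0 < √x := sqrt_pos.mpr hx
  have hpoly : HasDerivAt (fun y : ℝ => 1 + (y - 6) * y) (2 * x - 6) x :=
    ((((hasDerivAt_id x).sub_const 6).mul (hasDerivAt_id x)).const_add 1).congr_deriv
      (by simp only [id]; ring)
  refine ((((hasDerivAt_id x).sub_const 1).const_mul 2).mul (hasDerivAt_sqrt hx.ne')).sub
    (hpoly.mul (hasDerivAt_arccos_sub_one_div_add_one hx)) |>.congr_deriv ?_
  simp only [id]
  field_simp
  linear_combination (6 - 2 * x) * sq_sqrt hx.le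

lemma continuousOn_lambdaOne : ContinuousOn lambdaOne (Set.Ioi (-1)) := by
  unfold lambdaOne
  refine ContinuousOn.sub (by fun_prop) (ContinuousOn.mul (by fun_prop) ?_)
  refine (ContinuousOn.div (by fun_prop) (by fun_prop) fun x hx => ?_).arccos
  exact (neg_lt_iff_pos_add.mp hx).ne'

lemma deriv_lambdaOne_pos {x : ℝ} (hx0 : 0 < x) (hx1 : x ≤ 1) :
    0 < 4 * √x * (x - 1) / (x + 1) + (6 - 2 * x) * arccos ((x - 1) / (x + 1)) := by
  have hpos : 0 < x + 1 := by linarith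
  have hsqrt : √x ≤ 1 := sqrt_le_one.mpr hx1
  have hfirst : -4 ≤ 4 * √x * (x - 1) / (x + 1) := by
    rw [le_div_iff₀ hpos]
    nlinarith [sqrt_nonneg x]
  have hright : π / 2 ≤ arccos ((x - 1) / (x + 1)) := by
    rw [arccos_eq_pi_div_two_sub_arcsin, le_sub_self_iff, arcsin_nonpos]
    exact div_nonpos_of_nonpos_of_nonneg (by linarith) hpos.le
  nlinarith [pi_gt_three]

lemma strictMonoOn_lambdaOne : StrictMonoOn lambdaOne (Set.Icc 0 1) := by
  refine strictMonoOn_of_deriv_pos (convex_Icc 0 1)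
    (continuousOn_lambdaOne.mono ((Set.Icc_subset_Ioi_iff zero_le_one).mpr (by norm_num))) fun x hx => ?_
  rw [interior_Icc] at hx
  rw [(hasDerivAt_lambdaOne hx.1).deriv]
  exact deriv_lambdaOne_pos hx.1 hx.2.le

lemma le_arccos_of_le_cos {a y : ℝ} (ha₀ : 0 ≤ a) (haπ : a ≤ π) (h : y ≤ cos a) :
    a ≤ arccos y := by
  simpa only [arccos_cos ha₀ haπ] using antitone_arccos h

lemma arccos_le_of_cos_le {a y : ℝ} (ha₀ : 0 ≤ a) (haπ : a ≤ π) (h : cos a ≤ y) :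
    arccos y ≤ a := by
  simpa only [arccos_cos ha₀ haπ] using antitone_arccos h

lemma two_mul_sq_one_sub_sq_div_eight_sub_one_le_cos {x : ℝ} (hx : x ^ 2 ≤ 8) :
    2 * (1 - x ^ 2 / 8) ^ 2 - 1 ≤ cos x := by
  have hhalf : 1 - x ^ 2 / 8 ≤ cos (x / 2) := by
    convert one_sub_sq_div_two_le_cos (x := x / 2) using 2; ring
  have hdouble : cos x = 2 * cos (x / 2) ^ 2 - 1 := by
    rw [← cos_two_mul, mul_div_cancel₀ x two_ne_zero]
  rw [hdouble]
  gcongr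
  linarith

lemma lambdaOne_023_neg : lambdaOne 0.23 < 0 := by
  have harccos : 0.886 ≤ arccos (77 / 123) :=
    le_arccos_of_le_cos (by norm_num) (by linarith [pi_gt_three])
      (le_trans (by norm_num) (two_mul_sq_one_sub_sq_div_eight_sub_one_le_cos (by norm_num)))
  have hsqrt : 0.4795 ≤ √0.23 := (le_sqrt (by norm_num) (by norm_num)).mpr (by norm_num)
  have hval : lambdaOne 0.23 = -1.54 * √0.23 + 0.3271 * (π - arccos (77 / 123)) := by
    rw [lambdaOne, show ((0.23 : ℝ) - 1) / (0.23 + 1) = -(77 / 123) by norm_num, arccos_neg]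
    ring
  rw [hval]
  linarith [pi_lt_d4]

lemma lambdaOne_0231_pos : 0 < lambdaOne 0.231 := by
  have hcos : cos 0.91 ≤ 769 / 1231 := by
    have h := (abs_le.mp (cos_bound (x := 0.91) (by norm_num [abs_of_pos]))).2
    rw [abs_of_pos (by norm_num)] at h
    linarith
  have harccos : arccos (769 / 1231) ≤ 0.91 :=
    arccos_le_of_cos_le (by norm_num) (by linarith [pi_gt_three]) hcos
  have hsqrt : √0.231 ≤ 0.4807 := (sqrt_le_left (by norm_num)).mpr (by norm_num)
  have hval : lambdaOne 0.231 = -1.538 * √0.231 + 0.332639 * (π - arccos (769 / 1231)) := by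
    rw [lambdaOne, show ((0.231 : ℝ) - 1) / (0.231 + 1) = -(769 / 1231) by norm_num, arccos_neg]
    ring
  rw [hval]
  linarith [pi_gt_d4]

theorem lambda_one_unique_zero :
    ∃ β₀ : ℝ, (0.23 < β₀ ∧ β₀ < 0.231 ∧ 0 < β₀ ∧ β₀ ≤ 1 ∧
        2 * (β₀ - 1) * Real.sqrt β₀ -
          (1 + (β₀ - 6) * β₀) * arccos ((β₀ - 1) / (β₀ + 1)) = 0) ∧
      ∀ β : ℝ, 0 < β → β ≤ 1 →
        2 * (β - 1) * Real.sqrt β -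
          (1 + (β - 6) * β) * arccos ((β - 1) / (β + 1)) = 0 → β = β₀ := by
  obtain ⟨β₀, ⟨hlo, hhi⟩, hzero⟩ : ∃ β₀ ∈ Set.Ioo (0.23 : ℝ) 0.231, lambdaOne β₀ = 0 :=
    intermediate_value_Ioo (by norm_num)
      (continuousOn_lambdaOne.mono ((Set.Icc_subset_Ioi_iff (by norm_num)).mpr (by norm_num)))
      ⟨lambdaOne_023_neg, lambdaOne_0231_pos⟩
  refine ⟨β₀, ⟨hlo, hhi, by linarith, by linarith, hzero⟩, fun β hβ₀ hβ₁ hβ => ?_⟩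
  exact strictMonoOn_lambdaOne.injOn ⟨hβ₀.le, hβ₁⟩ ⟨by linarith, by linarith⟩ (hβ.trans hzero.symm)
end
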